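/- arXiv:math/0602296 — 7 statements merged into one kernel-verified Lean document; each statement's English description precedes it below -/
import Mathlib

section
/- Let T > 0, let ψ_k : ℝ^d → ℝ (k = 1,…,n_g) be continuously differentiable, and let H be a symmetric n_g × n_g real matrix. Let u : [0,T] → (ℝ^d)^{n_g} and P : [0,T] → (ℝ^d)^{n_p} be continuous and Q : [0,T] → (ℝ^d)^{n_p} be continuously differentiable, and define the constrained action 𝒜(u,P,Q) = ∫_0^T [ ½ Σ_{k,l} u_k(t)·H_{kl} u_l(t) + Σ_β P_β(t)·( dQ_β/dt − Σ_k u_k(t) ψ_k(Q_β(t)) ) ] dt. Suppose (u,P,Q) is a critical point of 𝒜, i.e. for every smooth variation (δu, δP, δQ) with δQ(0) = δQ(T) = 0 the derivative at ε = 0 of 𝒜(u+εδu, P+εδP, Q+εδQ) vanishes. Then for all t ∈ (0,T): (a) dQ_β/dt = Σ_k u_k ψ_k(Q_β) for every β; (b) dP_β/dt = −Σ_k (P_β·u_k) ∇ψ_k(Q_β) for every β; and (c) Σ_l H_{kl} u_l = Σ_β P_β ψ_k(Q_β) for every k. -/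
/-- Gradient of a scalar function on `ℝ^d`, as the vector of partial derivatives. -/
noncomputable def grad {d : ℕ} (f : (Fin d → ℝ) → ℝ) (x : Fin d → ℝ) : Fin d → ℝ :=
  fun i => fderiv ℝ f x (Pi.single i 1)

/-- Euclidean dot product on `ℝ^d`. -/
noncomputable def dot {d : ℕ} (x y : Fin d → ℝ) : ℝ := ∑ i, x i * y i

open intervalIntegral MeasureTheory Metric

section kit
variable {d : ℕ}

lemma dot_single_one (i : Fin d) (v : Fin d → ℝ) :
    dot (Pi.single i 1) v = v i := by
  simp [dot, Pi.single_apply, ite_mul]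

lemma dot_zero_left (v : Fin d → ℝ) : dot 0 v = 0 := by simp [dot]

lemma dot_zero_right (v : Fin d → ℝ) : dot v 0 = 0 := by simp [dot]

lemma dot_smul_left (c : ℝ) (a v : Fin d → ℝ) : dot (c • a) v = c * dot a v := by
  simp [dot, Finset.mul_sum, mul_assoc]

lemma dot_smul_right (c : ℝ) (v a : Fin d → ℝ) : dot v (c • a) = c * dot v a := by
  simp [dot, Finset.mul_sum]
  exact Finset.sum_congr rfl fun i _ => by ring

lemma dot_single_one_right (i : Fin d) (v : Fin d → ℝ) :
    dot v (Pi.single i 1) = v i := by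
  simp [dot, Pi.single_apply, mul_ite]

lemma cont_dot {α : Type*} [TopologicalSpace α] {a b : α → Fin d → ℝ}
    (ha : Continuous a) (hb : Continuous b) :
    Continuous fun t => dot (a t) (b t) := by
  unfold dot
  exact continuous_finset_sum _ fun i _ =>
    ((continuous_apply i).comp ha).mul ((continuous_apply i).comp hb)

lemma hasDerivAt_affine {a c b : ℝ} (x : ℝ) :
    HasDerivAt (fun e : ℝ => a + (e * c) * b) (c * b) x := by
  have h := ((hasDerivAt_mul_const (c * b)).const_add a (x := x))
  simpa [mul_assoc] using h

lemma hasDerivAt_dot {v w : ℝ → Fin d → ℝ} {v' w' : Fin d → ℝ} {x : ℝ}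
    (hv : ∀ i, HasDerivAt (fun e => v e i) (v' i) x)
    (hw : ∀ i, HasDerivAt (fun e => w e i) (w' i) x) :
    HasDerivAt (fun e => dot (v e) (w e)) (dot v' (w x) + dot (v x) w') x := by
  have h : HasDerivAt (fun e => ∑ i, v e i * w e i)
      (∑ i, (v' i * w x i + v x i * w' i)) x :=
    HasDerivAt.fun_sum fun i _ => (hv i).mul (hw i)
  simpa [dot, Finset.sum_add_distrib] using h

lemma hasDerivAt_pi_of {ι : Type*} [Fintype ι] {f : ℝ → ι → ℝ} {v : ι → ℝ} {x : ℝ}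
    (h : ∀ i, HasDerivAt (fun s => f s i) (v i) x) : HasDerivAt f v x := by
  rw [hasDerivAt_iff_hasFDerivAt]
  apply hasFDerivAt_pi''
  intro i
  have h2 := (h i).hasFDerivAt
  have h3 : (ContinuousLinearMap.proj (R := ℝ) (φ := fun _ : ι => ℝ) i).comp
      (ContinuousLinearMap.toSpanSingleton ℝ v)
      = ContinuousLinearMap.toSpanSingleton ℝ (v i) := by
    ext z
    simp
  rw [h3]
  exact h2

end kit

noncomputable def gtest (T : ℝ) (n : ℕ) : ℝ → ℝ :=
  fun t => t ^ (n + 1) / (n + 1) - T ^ n / (n + 1) * t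

noncomputable def gdtest (T : ℝ) (n : ℕ) : ℝ → ℝ :=
  fun t => t ^ n - T ^ n / (n + 1)

lemma gtest_hasDerivAt (T : ℝ) (n : ℕ) (t : ℝ) :
    HasDerivAt (gtest T n) (gdtest T n t) t := by
  have h1 : HasDerivAt (fun t : ℝ => t ^ (n + 1) / (n + 1))
      ((((n:ℝ) + 1) * t ^ n) / (n + 1)) t := by
    simpa using (hasDerivAt_pow (n + 1) t).div_const ((n : ℝ) + 1)
  have h2 : HasDerivAt (fun t : ℝ => T ^ n / (n + 1) * t) (T ^ n / (n + 1)) t := by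
    simpa using (hasDerivAt_id t).const_mul (T ^ n / ((n : ℝ) + 1))
  have h3 := h1.sub h2
  have h4 : (((n:ℝ) + 1) * t ^ n) / (n + 1) = t ^ n := by field_simp
  rw [h4] at h3
  exact h3

lemma gtest_continuous (T : ℝ) (n : ℕ) : Continuous (gtest T n) := by
  unfold gtest; fun_prop

lemma gdtest_continuous (T : ℝ) (n : ℕ) : Continuous (gdtest T n) := by
  unfold gdtest; fun_prop

lemma gtest_contDiff (T : ℝ) (n : ℕ) : ContDiff ℝ (⊤ : ℕ∞) (gtest T n) :=
  ((contDiff_id.pow (n + 1)).div_const _).sub (contDiff_const.mul contDiff_id)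

lemma gtest_zero (T : ℝ) (n : ℕ) : gtest T n 0 = 0 := by simp [gtest]

lemma gtest_T (T : ℝ) (n : ℕ) (hT : 0 < T) : gtest T n T = 0 := by
  unfold gtest
  field_simp
  ring

lemma moments_zero {T : ℝ} (hT : 0 < T) {f : ℝ → ℝ} (hf : Continuous f)
    (h : ∀ n : ℕ, ∫ t in (0:ℝ)..T, t ^ n * f t = 0) :
    ∀ t ∈ Set.Icc (0:ℝ) T, f t = 0 := by
  have hpoly : ∀ p : Polynomial ℝ, ∫ t in (0:ℝ)..T, p.eval t * f t = 0 := by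
    intro p
    have heq : ∀ t : ℝ, p.eval t * f t
        = ∑ n ∈ Finset.range (p.natDegree + 1), p.coeff n * (t ^ n * f t) := by
      intro t
      rw [Polynomial.eval_eq_sum_range, Finset.sum_mul]
      simp [mul_assoc]
    rw [intervalIntegral.integral_congr (g := fun t =>
      ∑ n ∈ Finset.range (p.natDegree + 1), p.coeff n * (t ^ n * f t))
      (fun t _ => heq t)]
    rw [intervalIntegral.integral_finset_sum]
    · simp only [intervalIntegral.integral_const_mul, h, mul_zero, Finset.sum_const_zero]
    · intro n _
      exact (continuous_const.mul ((continuous_pow n).mul hf)).intervalIntegrable _ _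
  obtain ⟨M, hM⟩ : ∃ M : ℝ, ∀ t ∈ Set.Icc (0:ℝ) T, |f t| ≤ M := by
    obtain ⟨M, hM⟩ := isCompact_Icc.exists_bound_of_continuousOn
      (hf.continuousOn (s := Set.Icc (0:ℝ) T))
    exact ⟨M, fun t ht => by simpa using hM t ht⟩
  have hM0 : 0 ≤ M := le_trans (abs_nonneg _) (hM 0 ⟨le_rfl, hT.le⟩)
  have hsq : ∫ t in (0:ℝ)..T, f t * f t = 0 := by
    by_contra hne
    set I := ∫ t in (0:ℝ)..T, f t * f t with hI
    have hIpos : 0 < |I| := abs_pos.mpr hne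
    set ε : ℝ := |I| / ((M + 1) * T) with hε
    have hεpos : 0 < ε := by positivity
    obtain ⟨p, hp⟩ := exists_polynomial_near_of_continuousOn 0 T f hf.continuousOn ε hεpos
    have hpc : Continuous fun t : ℝ => p.eval t := p.continuous
    have h1 : I = ∫ t in (0:ℝ)..T, (f t - p.eval t) * f t := by
      have := intervalIntegral.integral_sub ((hf.mul hf).intervalIntegrable (μ := volume) 0 T)
        ((hpc.mul hf).intervalIntegrable (μ := volume) 0 T)
      simp only [sub_mul, Pi.mul_apply] at this ⊢
      rw [this, hpoly p, sub_zero, hI]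
    have h2 : |I| ≤ ε * M * T := by
      rw [h1]
      calc |∫ t in (0:ℝ)..T, (f t - p.eval t) * f t|
          ≤ ∫ t in (0:ℝ)..T, |(f t - p.eval t) * f t| :=
            intervalIntegral.abs_integral_le_integral_abs hT.le
        _ ≤ ∫ t in (0:ℝ)..T, ε * M := by
            apply intervalIntegral.integral_mono_on hT.le
            · exact (((hf.sub hpc).mul hf).abs).intervalIntegrable _ _
            · exact intervalIntegrable_const
            · intro t ht
              rw [abs_mul]
              have h3 : |f t - p.eval t| ≤ ε := by
                rw [abs_sub_comm]; exact (hp t ht).le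
              exact mul_le_mul h3 (hM t ht) (abs_nonneg _) hεpos.le
        _ = ε * M * T := by
            rw [intervalIntegral.integral_const, smul_eq_mul]; ring
    have : ε * M * T < |I| := by
      rw [hε]
      rw [div_mul_eq_mul_div, div_mul_eq_mul_div, div_lt_iff₀ (by positivity)]
      have : M * T < (M + 1) * T := by nlinarith
      nlinarith [hIpos]
    linarith
  intro t ht
  by_contra hne
  have hpos : 0 < ∫ s in (0:ℝ)..T, f s * f s := by
    apply intervalIntegral.integral_pos hT ((hf.mul hf).continuousOn)
    · intro x _; exact mul_self_nonneg _
    · refine ⟨t, ht, ?_⟩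
      rcases lt_or_gt_of_ne hne with h1 | h1
      · exact mul_pos_of_neg_of_neg h1 h1
      · exact mul_pos h1 h1
  linarith [hsq ▸ hpos]


lemma dubois {T : ℝ} (hT : 0 < T) (p G : ℝ → ℝ) (hp : Continuous p) (hG : Continuous G)
    (h : ∀ n : ℕ, ∫ t in (0:ℝ)..T,
      (p t * gdtest T n t + G t * gtest T n t) = 0) :
    ∀ t ∈ Set.Ioo (0:ℝ) T, HasDerivAt p (G t) t := by
  set Φ : ℝ → ℝ := fun x => ∫ s in (0:ℝ)..x, G s with hΦdef
  have hΦ : ∀ x : ℝ, HasDerivAt Φ (G x) x := fun x =>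
    intervalIntegral.integral_hasDerivAt_right (hG.intervalIntegrable _ _)
      (hG.stronglyMeasurable.stronglyMeasurableAtFilter) hG.continuousAt
  have hΦc : Continuous Φ := by
    rw [continuous_iff_continuousAt]
    exact fun x => (hΦ x).continuousAt
  set g : ℕ → ℝ → ℝ := gtest T with hgdef
  set gd : ℕ → ℝ → ℝ := gdtest T with hgddef
  have hgd : ∀ (n : ℕ) (t : ℝ), HasDerivAt (g n) (gd n t) t := fun n t =>
    gtest_hasDerivAt T n t
  have hgcont : ∀ n, Continuous (g n) := fun n => gtest_continuous T n
  have hgdcont : ∀ n, Continuous (gd n) := fun n => gdtest_continuous T n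
  have hg0 : ∀ n, g n 0 = 0 := fun n => gtest_zero T n
  have hgT : ∀ n, g n T = 0 := fun n => gtest_T T n hT
  -- integration by parts :  ∫ Φ * gd n = - ∫ G * g n
  have hibp : ∀ n : ℕ, ∫ t in (0:ℝ)..T, Φ t * gd n t = - ∫ t in (0:ℝ)..T, G t * g n t := by
    intro n
    have := intervalIntegral.integral_mul_deriv_eq_deriv_mul_of_hasDerivAt
      (a := (0:ℝ)) (b := T) (u := Φ) (v := g n) (u' := G) (v' := gd n)
      (hΦc.continuousOn) ((hgcont n).continuousOn)
      (fun x _ => hΦ x) (fun x _ => hgd n x)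
      (hG.intervalIntegrable _ _) ((hgdcont n).intervalIntegrable _ _)
    rw [this, hg0, hgT]
    simp
  -- hence ∫ (p - Φ) * gd n = 0
  have hweak : ∀ n : ℕ, ∫ t in (0:ℝ)..T, (p t - Φ t) * gd n t = 0 := by
    intro n
    have hsplit : ∫ t in (0:ℝ)..T, (p t * gd n t + G t * g n t)
        = (∫ t in (0:ℝ)..T, p t * gd n t) + ∫ t in (0:ℝ)..T, G t * g n t :=
      intervalIntegral.integral_add ((hp.mul (hgdcont n)).intervalIntegrable _ _)
        ((hG.mul (hgcont n)).intervalIntegrable _ _)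
    have hsub : ∫ t in (0:ℝ)..T, (p t - Φ t) * gd n t
        = (∫ t in (0:ℝ)..T, p t * gd n t) - ∫ t in (0:ℝ)..T, Φ t * gd n t := by
      rw [← intervalIntegral.integral_sub (f := fun t => p t * gd n t) (g := fun t => Φ t * gd n t) ((hp.mul (hgdcont n)).intervalIntegrable _ _)
        ((hΦc.mul (hgdcont n)).intervalIntegrable _ _)]
      simp [sub_mul]
    rw [hsub, hibp n]
    have := h n
    rw [hsplit] at this
    linarith
  -- moments of (p - Φ - m) vanish
  set q : ℝ → ℝ := fun t => p t - Φ t with hqdef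
  have hqc : Continuous q := hp.sub hΦc
  set m : ℝ := (∫ t in (0:ℝ)..T, q t) / T with hmdef
  have hmom : ∀ n : ℕ, ∫ t in (0:ℝ)..T, t ^ n * (q t - m) = 0 := by
    intro n
    have h1 : ∫ t in (0:ℝ)..T, t ^ n * (q t - m)
        = (∫ t in (0:ℝ)..T, q t * t ^ n) - m * ∫ t in (0:ℝ)..T, t ^ n := by
      rw [← intervalIntegral.integral_const_mul, ← intervalIntegral.integral_sub
        (f := fun t => q t * t ^ n) (g := fun t => m * t ^ n)
        ((hqc.mul (continuous_pow n)).intervalIntegrable _ _)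
        ((continuous_const.mul (continuous_pow n)).intervalIntegrable _ _)]
      congr 1; ext t; ring
    have h2 : ∫ t in (0:ℝ)..T, q t * gd n t
        = (∫ t in (0:ℝ)..T, q t * t ^ n) - (T ^ n / (n + 1)) * ∫ t in (0:ℝ)..T, q t := by
      rw [← intervalIntegral.integral_const_mul, ← intervalIntegral.integral_sub
        (f := fun t => q t * t ^ n) (g := fun t => T ^ n / (n + 1) * q t)
        ((hqc.mul (continuous_pow n)).intervalIntegrable _ _)
        ((continuous_const.mul hqc).intervalIntegrable _ _)]
      congr 1; ext t; simp [hgddef, gdtest]; ring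
    have h3 := hweak n
    rw [h2] at h3
    rw [h1, integral_pow]
    have hT0 : (T:ℝ) ≠ 0 := hT.ne'
    have hn1 : ((n:ℝ) + 1) ≠ 0 := by positivity
    have h4 : ∫ t in (0:ℝ)..T, q t * t ^ n = T ^ n / (n + 1) * ∫ t in (0:ℝ)..T, q t := by
      linarith
    rw [h4, hmdef]
    have h5 : (T:ℝ) ^ (n + 1) = T ^ n * T := pow_succ T n
    field_simp
    ring
  have hconst := moments_zero hT (hqc.sub continuous_const) hmom
  intro t ht
  have hev : p =ᶠ[nhds t] fun s => Φ s + m := by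
    filter_upwards [Ioo_mem_nhds ht.1 ht.2] with s hs
    have := hconst s ⟨hs.1.le, hs.2.le⟩
    simp only [hqdef] at this
    linarith [sub_eq_zero.mp this]
  exact ((hΦ t).add_const m).congr_of_eventuallyEq hev

lemma key {T : ℝ} (F F' : ℝ → ℝ → ℝ)
    (hF : ∀ ε, Continuous (F ε))
    (hF' : Continuous fun p : ℝ × ℝ => F' p.1 p.2)
    (hd : ∀ (t : ℝ) (ε : ℝ), HasDerivAt (fun e => F e t) (F' ε t) ε)
    (hderiv : deriv (fun ε => ∫ t in (0:ℝ)..T, F ε t) 0 = 0) :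
    ∫ t in (0:ℝ)..T, F' 0 t = 0 := by
  obtain ⟨C, hC⟩ := ((isCompact_Icc (a := (-1:ℝ)) (b := 1)).prod
    (isCompact_uIcc (a := (0:ℝ)) (b := T))).exists_bound_of_continuousOn hF'.continuousOn
  have hmain := intervalIntegral.hasDerivAt_integral_of_dominated_loc_of_deriv_le
    (F := F) (F' := F') (x₀ := (0:ℝ)) (a := (0:ℝ)) (b := T) (bound := fun _ => C)
    (μ := volume) (ball_mem_nhds (0:ℝ) one_pos)
    (Filter.Eventually.of_forall fun x => (hF x).aestronglyMeasurable)
    (((hF 0).intervalIntegrable _ _))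
    ((hF'.comp (continuous_const.prodMk continuous_id)).aestronglyMeasurable)
    (Filter.Eventually.of_forall fun t ht x hx => by
      have hx1 : x ∈ Set.Icc (-1:ℝ) 1 := by
        rw [mem_ball, Real.dist_eq, sub_zero] at hx
        exact ⟨by linarith [abs_lt.mp hx], by linarith [abs_lt.mp hx]⟩
      exact hC (x, t) ⟨hx1, Set.Ioc_subset_Icc_self ht⟩)
    intervalIntegrable_const
    (Filter.Eventually.of_forall fun t _ x _ => hd t x)
  have h2 := hmain.2.deriv
  rw [hderiv] at h2
  exact h2.symm

/-- A critical point `(u, P, Q)` of the constrained VPM action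
`𝒜 = ∫₀ᵀ [ ½ Σ_{k,l} u_k·H_{kl} u_l + Σ_β P_β·( Q̇_β − Σ_k u_k ψ_k(Q_β) ) ] dt`
satisfies, for `t ∈ (0,T)`:
(a) `Q̇_β = Σ_k u_k ψ_k(Q_β)`, (b) `Ṗ_β = −Σ_k (P_β·u_k) ∇ψ_k(Q_β)`, and
(c) `Σ_l H_{kl} u_l = Σ_β P_β ψ_k(Q_β)`. -/
theorem stmt1 (d ng np : ℕ) (T : ℝ) (hT : 0 < T)
    (ψ : Fin ng → (Fin d → ℝ) → ℝ) (hψ : ∀ k, ContDiff ℝ 1 (ψ k))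
    (H : Matrix (Fin ng) (Fin ng) ℝ) (hH : H.IsSymm)
    (u : ℝ → Fin ng → Fin d → ℝ) (hu : Continuous u)
    (P : ℝ → Fin np → Fin d → ℝ) (hP : Continuous P)
    (Q : ℝ → Fin np → Fin d → ℝ) (hQ : ContDiff ℝ 1 Q)
    (A : (ℝ → Fin ng → Fin d → ℝ) → (ℝ → Fin np → Fin d → ℝ) →
      (ℝ → Fin np → Fin d → ℝ) → ℝ)
    (hA : ∀ u' P' Q', A u' P' Q' = ∫ t in (0:ℝ)..T,
      ((1/2) * ∑ k, ∑ l, H k l * dot (u' t k) (u' t l)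
        + ∑ β, dot (P' t β) (deriv Q' t β - ∑ k, ψ k (Q' t β) • u' t k)))
    (hcrit : ∀ (δu : ℝ → Fin ng → Fin d → ℝ) (δP δQ : ℝ → Fin np → Fin d → ℝ),
      ContDiff ℝ (⊤ : ℕ∞) δu → ContDiff ℝ (⊤ : ℕ∞) δP → ContDiff ℝ (⊤ : ℕ∞) δQ →
      δQ 0 = 0 → δQ T = 0 →
      deriv (fun ε : ℝ => A (fun t => u t + ε • δu t) (fun t => P t + ε • δP t)
        (fun t => Q t + ε • δQ t)) 0 = 0) :
    ∀ t ∈ Set.Ioo (0:ℝ) T,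
      (∀ β, deriv Q t β = ∑ k, ψ k (Q t β) • u t k) ∧
      (∀ β, HasDerivAt (fun s => P s β)
        (-∑ k, dot (P t β) (u t k) • grad (ψ k) (Q t β)) t) ∧
      (∀ k, ∑ l, H k l • u t l = ∑ β, ψ k (Q t β) • P t β) := by
  classical
  have hψc : ∀ k, Continuous (ψ k) := fun k => (hψ k).continuous
  have hQc : Continuous Q := hQ.continuous
  have hQd : Continuous (deriv Q) := hQ.continuous_deriv le_rfl
  have hQdiff : ∀ t, HasDerivAt Q (deriv Q t) t := fun t =>
    ((hQ.differentiable one_ne_zero) t).hasDerivAt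
  have huk : ∀ k, Continuous fun t => u t k := fun k => (continuous_apply k).comp hu
  have hPβ : ∀ β, Continuous fun t => P t β := fun β => (continuous_apply β).comp hP
  have hQβ : ∀ β, Continuous fun t => Q t β := fun β => (continuous_apply β).comp hQc
  have hQdβ : ∀ β, Continuous fun t => deriv Q t β := fun β => (continuous_apply β).comp hQd
  have heβ : ∀ β, Continuous fun t => deriv Q t β - ∑ k, ψ k (Q t β) • u t k := fun β =>
    (hQdβ β).sub (continuous_finset_sum _ fun k _ =>
      (((hψc k).comp (hQβ β)).smul (huk k)))
  have hC1 : Continuous fun t => (1/2 : ℝ) * ∑ k, ∑ l, H k l * dot (u t k) (u t l) :=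
    continuous_const.mul (continuous_finset_sum _ fun k _ => continuous_finset_sum _ fun l _ =>
      continuous_const.mul (cont_dot (huk k) (huk l)))
  -- ===================== Part (a) =====================
  have parta : ∀ (β : Fin np) (i : Fin d), ∀ t ∈ Set.Icc (0:ℝ) T,
      (deriv Q t β - ∑ k, ψ k (Q t β) • u t k) i = 0 := by
    intro β i
    have hcont : Continuous fun t => (deriv Q t β - ∑ k, ψ k (Q t β) • u t k) i :=
      (continuous_apply i).comp (heβ β)
    apply moments_zero hT hcont
    intro n
    set W : Fin np → Fin d → ℝ := Pi.single β (Pi.single i 1) with hW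
    set F : ℝ → ℝ → ℝ := fun ε t =>
      (1/2 : ℝ) * ∑ k, ∑ l, H k l * dot (u t k) (u t l)
      + ∑ β', dot (P t β' + (ε * t ^ n) • W β')
          (deriv Q t β' - ∑ k, ψ k (Q t β') • u t k) with hF
    set F' : ℝ → ℝ → ℝ := fun ε t =>
      0 + ∑ β', (dot (t ^ n • W β') (deriv Q t β' - ∑ k, ψ k (Q t β') • u t k)
        + dot (P t β' + (ε * t ^ n) • W β') 0) with hF'
    have hδP : ContDiff ℝ (⊤ : ℕ∞) fun t : ℝ => t ^ n • W :=
      (contDiff_id.pow n).smul contDiff_const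
    have h0 := hcrit (fun _ => 0) (fun t => t ^ n • W) (fun _ => 0)
      contDiff_const hδP contDiff_const rfl rfl
    have hfun : (fun ε : ℝ => A (fun t => u t + ε • (fun _ => (0:Fin ng → Fin d → ℝ)) t)
        (fun t => P t + ε • (fun t : ℝ => t ^ n • W) t)
        (fun t => Q t + ε • (fun _ => (0:Fin np → Fin d → ℝ)) t))
        = fun ε => ∫ t in (0:ℝ)..T, F ε t := by
      funext ε
      rw [hA]
      apply intervalIntegral.integral_congr
      intro t _
      simp only [hF, Pi.zero_apply, smul_zero, add_zero, Pi.add_apply, Pi.smul_apply, smul_smul]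
    rw [hfun] at h0
    have hFc : ∀ ε, Continuous (F ε) := by
      intro ε
      rw [hF]
      exact hC1.add (continuous_finset_sum _ fun β' _ =>
        cont_dot ((hPβ β').add ((continuous_const.mul (continuous_pow n)).smul
          continuous_const)) (heβ β'))
    have hF'c : Continuous fun p : ℝ × ℝ => F' p.1 p.2 := by
      rw [hF']
      refine continuous_const.add (continuous_finset_sum _ fun β' _ => Continuous.add ?_ ?_)
      · exact cont_dot (((continuous_pow n).comp continuous_snd).smul continuous_const)
          ((heβ β').comp continuous_snd)
      · exact cont_dot (((hPβ β').comp continuous_snd).add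
          (((continuous_fst.mul ((continuous_pow n).comp continuous_snd))).smul
            continuous_const)) continuous_const
    have hd : ∀ (t : ℝ) (ε : ℝ), HasDerivAt (fun e => F e t) (F' ε t) ε := by
      intro t ε
      simp only [hF, hF']
      refine (hasDerivAt_const ε _).add (HasDerivAt.fun_sum fun β' _ => ?_)
      exact hasDerivAt_dot (fun j => hasDerivAt_affine ε) (fun j => hasDerivAt_const ε _)
    have hkey := key F F' hFc hF'c hd h0
    have hsimp : ∀ t : ℝ, t ^ n * ((deriv Q t β - ∑ k, ψ k (Q t β) • u t k) i) = F' 0 t := by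
      intro t
      simp only [hF', dot_zero_right, add_zero, zero_add]
      rw [Finset.sum_eq_single β]
      · rw [hW, Pi.single_eq_same, dot_smul_left, dot_single_one]
      · intro b _ hb
        rw [hW, Pi.single_eq_of_ne hb]
        simp [dot_zero_left, smul_zero]
      · intro hβ
        exact absurd (Finset.mem_univ β) hβ
    have hcongr := intervalIntegral.integral_congr (μ := volume) (a := (0:ℝ)) (b := T)
      (f := fun t => t ^ n * ((deriv Q t β - ∑ k, ψ k (Q t β) • u t k) i)) (g := F' 0)
      (fun t _ => hsimp t)
    rw [hcongr]
    exact hkey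
  -- ===================== Part (c) =====================
  have partc : ∀ (k₀ : Fin ng) (i : Fin d), ∀ t ∈ Set.Icc (0:ℝ) T,
      ((∑ l, H k₀ l * u t l i) - ∑ β', ψ k₀ (Q t β') * P t β' i) = 0 := by
    intro k₀ i
    have hcont : Continuous fun t => (∑ l, H k₀ l * u t l i) - ∑ β', ψ k₀ (Q t β') * P t β' i := by
      apply Continuous.sub
      · exact continuous_finset_sum _ fun l _ =>
          continuous_const.mul ((continuous_apply i).comp (huk l))
      · exact continuous_finset_sum _ fun β' _ =>
          ((hψc k₀).comp (hQβ β')).mul ((continuous_apply i).comp (hPβ β'))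
    apply moments_zero hT hcont
    intro n
    set Wu : Fin ng → Fin d → ℝ := Pi.single k₀ (Pi.single i 1) with hWu
    set F : ℝ → ℝ → ℝ := fun ε t =>
      (1/2 : ℝ) * ∑ k, ∑ l, H k l * dot (u t k + (ε * t ^ n) • Wu k) (u t l + (ε * t ^ n) • Wu l)
      + ∑ β', dot (P t β')
          (deriv Q t β' - ∑ k, ψ k (Q t β') • (u t k + (ε * t ^ n) • Wu k)) with hF
    set F' : ℝ → ℝ → ℝ := fun ε t =>
      (1/2 : ℝ) * ∑ k, ∑ l, H k l * (dot (t ^ n • Wu k) (u t l + (ε * t ^ n) • Wu l)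
          + dot (u t k + (ε * t ^ n) • Wu k) (t ^ n • Wu l))
      + ∑ β', (dot (0 : Fin d → ℝ)
            (deriv Q t β' - ∑ k, ψ k (Q t β') • (u t k + (ε * t ^ n) • Wu k))
          + dot (P t β') fun j => 0 - ∑ k, ψ k (Q t β') * (t ^ n * Wu k j)) with hF'
    have hδu : ContDiff ℝ (⊤ : ℕ∞) fun t : ℝ => t ^ n • Wu :=
      (contDiff_id.pow n).smul contDiff_const
    have h0 := hcrit (fun t => t ^ n • Wu) (fun _ => 0) (fun _ => 0)
      hδu contDiff_const contDiff_const rfl rfl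
    have hfun : (fun ε : ℝ => A (fun t => u t + ε • (fun t : ℝ => t ^ n • Wu) t)
        (fun t => P t + ε • (fun _ => (0:Fin np → Fin d → ℝ)) t)
        (fun t => Q t + ε • (fun _ => (0:Fin np → Fin d → ℝ)) t))
        = fun ε => ∫ t in (0:ℝ)..T, F ε t := by
      funext ε
      rw [hA]
      apply intervalIntegral.integral_congr
      intro t _
      simp only [hF, Pi.zero_apply, smul_zero, add_zero, Pi.add_apply, Pi.smul_apply, smul_smul]
    rw [hfun] at h0
    have hvc : ∀ (ε : ℝ) (k : Fin ng), Continuous fun t => u t k + (ε * t ^ n) • Wu k :=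
      fun ε k => (huk k).add ((continuous_const.mul (continuous_pow n)).smul continuous_const)
    have hFc : ∀ ε, Continuous (F ε) := by
      intro ε
      rw [hF]
      refine Continuous.add (continuous_const.mul ?_) (continuous_finset_sum _ fun β' _ => ?_)
      · exact continuous_finset_sum _ fun k _ => continuous_finset_sum _ fun l _ =>
          continuous_const.mul (cont_dot (hvc ε k) (hvc ε l))
      · exact cont_dot (hPβ β') ((hQdβ β').sub (continuous_finset_sum _ fun k _ =>
          ((hψc k).comp (hQβ β')).smul (hvc ε k)))
    have hvc2 : ∀ k : Fin ng, Continuous fun p : ℝ × ℝ => u p.2 k + (p.1 * p.2 ^ n) • Wu k :=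
      fun k => ((huk k).comp continuous_snd).add
        ((continuous_fst.mul ((continuous_pow n).comp continuous_snd)).smul continuous_const)
    have hF'c : Continuous fun p : ℝ × ℝ => F' p.1 p.2 := by
      rw [hF']
      refine Continuous.add (continuous_const.mul ?_) (continuous_finset_sum _ fun β' _ =>
        Continuous.add ?_ ?_)
      · exact continuous_finset_sum _ fun k _ => continuous_finset_sum _ fun l _ =>
          continuous_const.mul (Continuous.add
            (cont_dot (((continuous_pow n).comp continuous_snd).smul continuous_const) (hvc2 l))
            (cont_dot (hvc2 k) (((continuous_pow n).comp continuous_snd).smul continuous_const)))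
      · exact cont_dot continuous_const (((hQdβ β').comp continuous_snd).sub
          (continuous_finset_sum _ fun k _ =>
            ((hψc k).comp ((hQβ β').comp continuous_snd)).smul (hvc2 k)))
      · refine cont_dot ((hPβ β').comp continuous_snd) (continuous_pi fun j => ?_)
        exact continuous_const.sub (continuous_finset_sum _ fun k _ =>
          ((hψc k).comp ((hQβ β').comp continuous_snd)).mul
            (((continuous_pow n).comp continuous_snd).mul continuous_const))
    have hd : ∀ (t : ℝ) (ε : ℝ), HasDerivAt (fun e => F e t) (F' ε t) ε := by
      intro t ε
      simp only [hF, hF']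
      refine HasDerivAt.add ?_ (HasDerivAt.fun_sum fun β' _ => ?_)
      · exact HasDerivAt.const_mul (1/2 : ℝ) (HasDerivAt.fun_sum fun k _ =>
          HasDerivAt.fun_sum fun l _ => HasDerivAt.const_mul (H k l)
            (hasDerivAt_dot (fun j => hasDerivAt_affine ε) (fun j => hasDerivAt_affine ε)))
      · refine hasDerivAt_dot (v := fun _ => P t β') (w' := fun j => 0 - ∑ k, ψ k (Q t β') * (t ^ n * Wu k j))
          (fun j => hasDerivAt_const ε _) (fun j => ?_)
        simp only [Pi.sub_apply, Finset.sum_apply, Pi.smul_apply, Pi.add_apply, smul_eq_mul]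
        exact (hasDerivAt_const ε _).sub (HasDerivAt.fun_sum fun k _ =>
          HasDerivAt.const_mul (ψ k (Q t β')) (hasDerivAt_affine ε))
    have hkey := key F F' hFc hF'c hd h0
    have hsimp : ∀ t : ℝ, t ^ n * ((∑ l, H k₀ l * u t l i) - ∑ β', ψ k₀ (Q t β') * P t β' i)
        = F' 0 t := by
      intro t
      simp only [hF', zero_mul, zero_smul, add_zero, dot_zero_left, zero_add]
      have hA1 : ∀ k l : Fin ng, H k l * (dot (t ^ n • Wu k) (u t l) + dot (u t k) (t ^ n • Wu l))
          = t ^ n * (H k l * dot (Wu k) (u t l)) + t ^ n * (H k l * dot (u t k) (Wu l)) := by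
        intro k l
        rw [dot_smul_left, dot_smul_right]
        ring
      rw [Finset.sum_congr rfl fun k _ => Finset.sum_congr rfl fun l _ => hA1 k l]
      have hA2 : ∑ k, ∑ l, (t ^ n * (H k l * dot (Wu k) (u t l))
            + t ^ n * (H k l * dot (u t k) (Wu l)))
          = t ^ n * (∑ l, H k₀ l * u t l i) + t ^ n * (∑ l, H k₀ l * u t l i) := by
        rw [Finset.sum_congr rfl fun k _ => Finset.sum_add_distrib, Finset.sum_add_distrib]
        congr 1
        · rw [Finset.sum_eq_single k₀]
          · rw [Finset.mul_sum]
            refine Finset.sum_congr rfl fun l _ => ?_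
            rw [hWu, Pi.single_eq_same, dot_single_one]
          · intro b _ hb
            apply Finset.sum_eq_zero
            intro l _
            rw [hWu, Pi.single_eq_of_ne hb, dot_zero_left, mul_zero, mul_zero]
          · exact fun h => absurd (Finset.mem_univ _) h
        · rw [Finset.sum_comm, Finset.sum_eq_single k₀]
          · rw [Finset.mul_sum]
            refine Finset.sum_congr rfl fun k _ => ?_
            rw [hWu, Pi.single_eq_same, dot_single_one_right, hH.apply]
          · intro b _ hb
            apply Finset.sum_eq_zero
            intro k _
            rw [hWu, Pi.single_eq_of_ne hb, dot_zero_right, mul_zero, mul_zero]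
          · exact fun h => absurd (Finset.mem_univ _) h
      rw [hA2]
      have hB1 : ∀ β' : Fin np, dot (P t β') (fun j => 0 - ∑ k, ψ k (Q t β') * (t ^ n * Wu k j))
          = -(ψ k₀ (Q t β') * t ^ n) * P t β' i := by
        intro β'
        simp only [dot, hWu, Pi.single_apply, ite_apply, Pi.zero_apply, mul_ite, mul_zero,
          mul_one, Finset.sum_ite_eq', Finset.mem_univ, if_true, zero_sub, mul_neg,
          Finset.sum_neg_distrib, ite_mul, zero_mul, neg_mul]
        ring
      rw [Finset.sum_congr rfl fun β' (_ : β' ∈ (Finset.univ : Finset (Fin np))) => hB1 β']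
      have hB2 : ∑ β', -(ψ k₀ (Q t β') * t ^ n) * P t β' i
          = -(t ^ n * ∑ β', ψ k₀ (Q t β') * P t β' i) := by
        rw [Finset.mul_sum, ← Finset.sum_neg_distrib]
        exact Finset.sum_congr rfl fun β' _ => by ring
      rw [hB2]
      ring
    have hcongr := intervalIntegral.integral_congr (μ := volume) (a := (0:ℝ)) (b := T)
      (f := fun t => t ^ n * ((∑ l, H k₀ l * u t l i) - ∑ β', ψ k₀ (Q t β') * P t β' i))
      (g := F' 0) (fun t _ => hsimp t)
    rw [hcongr]
    exact hkey
  -- ===================== Part (b) =====================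
  have hψfc : ∀ k, Continuous (fderiv ℝ (ψ k)) := fun k => (hψ k).continuous_fderiv one_ne_zero
  have partb : ∀ (β : Fin np) (i : Fin d), ∀ t ∈ Set.Ioo (0:ℝ) T,
      HasDerivAt (fun s => P s β i)
        (-∑ k, dot (P t β) (u t k) * fderiv ℝ (ψ k) (Q t β) (Pi.single i 1)) t := by
    intro β i
    have hGc : Continuous fun t => -∑ k, dot (P t β) (u t k)
        * fderiv ℝ (ψ k) (Q t β) (Pi.single i 1) := by
      refine Continuous.neg (continuous_finset_sum _ fun k _ => Continuous.mul ?_ ?_)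
      · exact cont_dot (hPβ β) (huk k)
      · exact isBoundedBilinearMap_apply.continuous.comp
          (((hψfc k).comp (hQβ β)).prodMk continuous_const)
    have hpc : Continuous fun s => P s β i := (continuous_apply i).comp (hPβ β)
    apply dubois hT _ _ hpc hGc
    intro n
    set W : Fin np → Fin d → ℝ := Pi.single β (Pi.single i 1) with hW
    have hQ'd : ∀ (ε s : ℝ), deriv (fun r => Q r + (ε * gtest T n r) • W) s
        = deriv Q s + (ε * gdtest T n s) • W := by
      intro ε s
      have h1 : HasDerivAt (fun r => (ε * gtest T n r) • W) ((ε * gdtest T n s) • W) s :=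
        ((gtest_hasDerivAt T n s).const_mul ε).smul_const W
      exact ((hQdiff s).add h1).deriv
    set F : ℝ → ℝ → ℝ := fun ε t =>
      (1/2 : ℝ) * ∑ k, ∑ l, H k l * dot (u t k) (u t l)
      + ∑ β', dot (P t β') (deriv Q t β' + (ε * gdtest T n t) • W β'
          - ∑ k, ψ k (Q t β' + (ε * gtest T n t) • W β') • u t k) with hF
    set F' : ℝ → ℝ → ℝ := fun ε t =>
      0 + ∑ β', (dot (0 : Fin d → ℝ) (deriv Q t β' + (ε * gdtest T n t) • W β'
          - ∑ k, ψ k (Q t β' + (ε * gtest T n t) • W β') • u t k)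
        + dot (P t β') fun j => gdtest T n t * W β' j
          - ∑ k, (fderiv ℝ (ψ k) (Q t β' + (ε * gtest T n t) • W β'))
              (gtest T n t • W β') * u t k j) with hF'
    have hδQ : ContDiff ℝ (⊤ : ℕ∞) fun t : ℝ => gtest T n t • W :=
      (gtest_contDiff T n).smul contDiff_const
    have hδQ0 : (fun t : ℝ => gtest T n t • W) 0 = 0 := by
      simp [gtest_zero T n]
    have hδQT : (fun t : ℝ => gtest T n t • W) T = 0 := by
      simp [gtest_T T n hT]
    have h0 := hcrit (fun _ => 0) (fun _ => 0) (fun t => gtest T n t • W)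
      contDiff_const contDiff_const hδQ hδQ0 hδQT
    have hfun : (fun ε : ℝ => A (fun t => u t + ε • (fun _ => (0:Fin ng → Fin d → ℝ)) t)
        (fun t => P t + ε • (fun _ => (0:Fin np → Fin d → ℝ)) t)
        (fun t => Q t + ε • (fun t : ℝ => gtest T n t • W) t))
        = fun ε => ∫ t in (0:ℝ)..T, F ε t := by
      funext ε
      rw [hA]
      apply intervalIntegral.integral_congr
      intro t _
      simp only [hF, Pi.zero_apply, smul_zero, add_zero, smul_smul, hQ'd,
        Pi.add_apply, Pi.smul_apply]
    rw [hfun] at h0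
    have hvec : ∀ (ε : ℝ) (β' : Fin np), Continuous fun t =>
        Q t β' + (ε * gtest T n t) • W β' :=
      fun ε β' => (hQβ β').add
        ((continuous_const.mul (gtest_continuous T n)).smul continuous_const)
    have hFc : ∀ ε, Continuous (F ε) := by
      intro ε
      rw [hF]
      refine hC1.add (continuous_finset_sum _ fun β' _ => cont_dot (hPβ β') ?_)
      refine Continuous.sub (Continuous.add (hQdβ β') ?_) ?_
      · exact (continuous_const.mul (gdtest_continuous T n)).smul continuous_const
      · exact continuous_finset_sum _ fun k _ =>
          ((hψc k).comp (hvec ε β')).smul (huk k)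
    have hvec2 : ∀ β' : Fin np, Continuous fun p : ℝ × ℝ =>
        Q p.2 β' + (p.1 * gtest T n p.2) • W β' :=
      fun β' => ((hQβ β').comp continuous_snd).add
        ((continuous_fst.mul ((gtest_continuous T n).comp continuous_snd)).smul
          continuous_const)
    have hF'c : Continuous fun p : ℝ × ℝ => F' p.1 p.2 := by
      rw [hF']
      refine continuous_const.add (continuous_finset_sum _ fun β' _ =>
        Continuous.add (cont_dot continuous_const ?_)
          (cont_dot ((hPβ β').comp continuous_snd) (continuous_pi fun j => ?_)))
      · refine Continuous.sub (Continuous.add ((hQdβ β').comp continuous_snd) ?_) ?_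
        · exact (continuous_fst.mul ((gdtest_continuous T n).comp continuous_snd)).smul
            continuous_const
        · exact continuous_finset_sum _ fun k _ =>
            ((hψc k).comp (hvec2 β')).smul ((huk k).comp continuous_snd)
      · refine Continuous.sub (((gdtest_continuous T n).comp continuous_snd).mul
          continuous_const) (continuous_finset_sum _ fun k _ => Continuous.mul ?_ ?_)
        · exact isBoundedBilinearMap_apply.continuous.comp
            ((((hψfc k).comp (hvec2 β'))).prodMk
              (((gtest_continuous T n).comp continuous_snd).smul continuous_const))
        · exact (continuous_apply j).comp ((huk k).comp continuous_snd)
    have hd : ∀ (t : ℝ) (ε : ℝ), HasDerivAt (fun e => F e t) (F' ε t) ε := by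
      intro t ε
      simp only [hF, hF']
      refine (hasDerivAt_const ε _).add (HasDerivAt.fun_sum fun β' _ => ?_)
      refine hasDerivAt_dot (v := fun _ => P t β')
        (w' := fun j => gdtest T n t * W β' j
          - ∑ k, (fderiv ℝ (ψ k) (Q t β' + (ε * gtest T n t) • W β'))
              (gtest T n t • W β') * u t k j)
        (fun j => hasDerivAt_const ε _) (fun j => ?_)
      simp only [Pi.sub_apply, Pi.add_apply, Pi.smul_apply, Finset.sum_apply, smul_eq_mul]
      refine HasDerivAt.sub (hasDerivAt_affine ε) (HasDerivAt.fun_sum fun k _ => ?_)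
      have hvecd : HasDerivAt (fun e => Q t β' + (e * gtest T n t) • W β')
          (gtest T n t • W β') ε :=
        ((hasDerivAt_mul_const (gtest T n t)).smul_const (W β')).const_add (Q t β')
      exact (((hψ k).differentiable one_ne_zero _).hasFDerivAt.comp_hasDerivAt ε hvecd).mul_const
        (u t k j)
    have hkey := key F F' hFc hF'c hd h0
    have hsimp : ∀ t : ℝ, P t β i * gdtest T n t
        + (-∑ k, dot (P t β) (u t k) * fderiv ℝ (ψ k) (Q t β) (Pi.single i 1))
          * gtest T n t = F' 0 t := by
      intro t
      simp only [hF', zero_mul, zero_smul, add_zero, dot_zero_left, zero_add]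
      rw [Finset.sum_eq_single β]
      · rw [hW, Pi.single_eq_same]
        have hmap : ∀ k : Fin ng, (fderiv ℝ (ψ k) (Q t β)) (gtest T n t • (Pi.single i 1 : Fin d → ℝ))
            = gtest T n t * fderiv ℝ (ψ k) (Q t β) (Pi.single i 1) := by
          intro k
          rw [ContinuousLinearMap.map_smul, smul_eq_mul]
        simp only [hmap]
        have hdot : dot (P t β) (fun j => gdtest T n t * (Pi.single i 1 : Fin d → ℝ) j
              - ∑ k, gtest T n t * fderiv ℝ (ψ k) (Q t β) (Pi.single i 1) * u t k j)
            = P t β i * gdtest T n t - gtest T n t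
              * ∑ k, dot (P t β) (u t k) * fderiv ℝ (ψ k) (Q t β) (Pi.single i 1) := by
          simp only [dot, mul_sub]
          rw [Finset.sum_sub_distrib]
          congr 1
          · simp [Pi.single_apply, mul_ite, mul_one, mul_zero, Finset.sum_ite_eq', mul_comm]
          · calc ∑ j, P t β j * ∑ k, gtest T n t
                  * fderiv ℝ (ψ k) (Q t β) (Pi.single i 1) * u t k j
                = ∑ j, ∑ k, P t β j * (gtest T n t
                  * fderiv ℝ (ψ k) (Q t β) (Pi.single i 1) * u t k j) :=
                  Finset.sum_congr rfl fun j _ => Finset.mul_sum _ _ _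
              _ = ∑ k, ∑ j, P t β j * (gtest T n t
                  * fderiv ℝ (ψ k) (Q t β) (Pi.single i 1) * u t k j) := Finset.sum_comm
              _ = ∑ k, gtest T n t * ((∑ j, P t β j * u t k j)
                  * fderiv ℝ (ψ k) (Q t β) (Pi.single i 1)) := by
                  refine Finset.sum_congr rfl fun k _ => ?_
                  rw [Finset.sum_mul, Finset.mul_sum]
                  exact Finset.sum_congr rfl fun j _ => by ring
              _ = gtest T n t * ∑ k, (∑ j, P t β j * u t k j)
                  * fderiv ℝ (ψ k) (Q t β) (Pi.single i 1) := by
                  rw [Finset.mul_sum]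
        rw [hdot]
        ring
      · intro b _ hb
        rw [hW, Pi.single_eq_of_ne hb]
        simp [dot]
      · exact fun h => absurd (Finset.mem_univ _) h
    have hcongr := intervalIntegral.integral_congr (μ := volume) (a := (0:ℝ)) (b := T)
      (f := fun t => P t β i * gdtest T n t
        + (-∑ k, dot (P t β) (u t k) * fderiv ℝ (ψ k) (Q t β) (Pi.single i 1))
          * gtest T n t)
      (g := F' 0) (fun t _ => hsimp t)
    rw [hcongr]
    exact hkey
  -- ===================== assembly =====================
  intro t ht
  have htIcc : t ∈ Set.Icc (0:ℝ) T := ⟨ht.1.le, ht.2.le⟩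
  refine ⟨?_, ?_, ?_⟩
  · intro β
    funext i
    have h1 := parta β i t htIcc
    rw [Pi.sub_apply] at h1
    exact sub_eq_zero.mp h1
  · intro β
    apply hasDerivAt_pi_of
    intro i
    have h1 := partb β i t ht
    have h2 : (-∑ k, dot (P t β) (u t k) • grad (ψ k) (Q t β)) i
        = -∑ k, dot (P t β) (u t k) * fderiv ℝ (ψ k) (Q t β) (Pi.single i 1) := by
      simp [grad, Finset.sum_apply]
    rw [h2]
    exact h1
  · intro k
    funext i
    have h1 := partc k i t htIcc
    have h2 := sub_eq_zero.mp h1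
    simp only [Finset.sum_apply, Pi.smul_apply, smul_eq_mul]
    exact h2
end

section
/- Let ψ_k : ℝ^d → ℝ (k = 1,…,n_g) be continuously differentiable. Let Q : ℝ² → (ℝ^d)^{n_p} be twice continuously differentiable in (t,ε), and let u, w : ℝ² → (ℝ^d)^{n_g} be differentiable, satisfying for every β and every (t,ε): ∂Q_β/∂t = Σ_k u_k(t,ε) ψ_k(Q_β(t,ε)) and ∂Q_β/∂ε = Σ_k w_k(t,ε) ψ_k(Q_β(t,ε)). Then for every β and every (t,ε), Σ_k (∂u_k/∂ε) ψ_k(Q_β) = Σ_k (∂w_k/∂t) ψ_k(Q_β) + Σ_{k,l} ψ_k(Q_β) [ (u_k · ∇ψ_l(Q_β)) w_l − (w_k · ∇ψ_l(Q_β)) u_l ]. (This is the identity expressing that constrained variations of the grid velocity have the form [δu]^P = [ẇ]^P − [ad_u w]^P in the discrete Euler–Poincaré theorem.) -/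
lemma fderiv_apply_eq_dot_grad {d : ℕ} (f : (Fin d → ℝ) → ℝ) (x v : Fin d → ℝ) :
    fderiv ℝ f x v = dot v (grad f x) := by
  have h : (∑ i, (v i) • (Pi.single i 1 : Fin d → ℝ)) = v := by
    funext j
    simp [Finset.sum_apply, Pi.single_apply, mul_ite]
  calc fderiv ℝ f x v = fderiv ℝ f x (∑ i, (v i) • (Pi.single i 1 : Fin d → ℝ)) := by rw [h]
    _ = ∑ i, (v i) • fderiv ℝ f x (Pi.single i 1 : Fin d → ℝ) := by
        rw [map_sum]; simp
    _ = dot v (grad f x) := by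
        simp [dot, grad, smul_eq_mul]

/-- For a two-parameter family `Q_β(t,ε)` with
`∂Q_β/∂t = Σ_k u_k ψ_k(Q_β)` and `∂Q_β/∂ε = Σ_k w_k ψ_k(Q_β)`, the constrained variations of
the grid velocity satisfy
`Σ_k (∂u_k/∂ε) ψ_k(Q_β) = Σ_k (∂w_k/∂t) ψ_k(Q_β)
  + Σ_{k,l} ψ_k(Q_β) [ (u_k·∇ψ_l(Q_β)) w_l − (w_k·∇ψ_l(Q_β)) u_l ]`,
i.e. `[δu]^P = [ẇ]^P − [ad_u w]^P`. -/
theorem stmt5 (d ng np : ℕ)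
    (ψ : Fin ng → (Fin d → ℝ) → ℝ) (hψ : ∀ k, ContDiff ℝ 1 (ψ k))
    (Q : ℝ → ℝ → Fin np → Fin d → ℝ)
    (hQ : ContDiff ℝ 2 (fun p : ℝ × ℝ => Q p.1 p.2))
    (u w : ℝ → ℝ → Fin ng → Fin d → ℝ)
    (hu : Differentiable ℝ (fun p : ℝ × ℝ => u p.1 p.2))
    (hw : Differentiable ℝ (fun p : ℝ × ℝ => w p.1 p.2))
    (ht : ∀ t ε β, deriv (fun s => Q s ε β) t = ∑ k, ψ k (Q t ε β) • u t ε k)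
    (hε : ∀ t ε β, deriv (fun e => Q t e β) ε = ∑ k, ψ k (Q t ε β) • w t ε k) :
    ∀ t ε β,
      ∑ k, ψ k (Q t ε β) • deriv (fun e => u t e k) ε
        = ∑ k, ψ k (Q t ε β) • deriv (fun s => w s ε k) t
          + ∑ k, ∑ l, ψ k (Q t ε β) •
            (dot (u t ε k) (grad (ψ l) (Q t ε β)) • w t ε l
              - dot (w t ε k) (grad (ψ l) (Q t ε β)) • u t ε l) := by
  intro t ε β
  set g : ℝ × ℝ → Fin d → ℝ := fun p => Q p.1 p.2 β with hgdef
  have hg : ContDiff ℝ 2 g := by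
    have := ((ContinuousLinearMap.proj β :
        ((Fin np) → Fin d → ℝ) →L[ℝ] (Fin d → ℝ)).contDiff).comp hQ
    exact this
  have hgd : Differentiable ℝ g := hg.differentiable (by norm_num)
  -- partial derivative curves
  have hcv_t : ∀ p : ℝ × ℝ, HasDerivAt (fun s => g (s, p.2)) (fderiv ℝ g p ((1:ℝ), (0:ℝ))) p.1 := by
    intro p
    have h1 : HasDerivAt (fun s : ℝ => ((s, p.2) : ℝ × ℝ)) ((1:ℝ), (0:ℝ)) p.1 :=
      (hasDerivAt_id p.1).prodMk (hasDerivAt_const p.1 p.2)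
    exact (hgd (p.1, p.2)).hasFDerivAt.comp_hasDerivAt p.1 h1
  have hcv_e : ∀ p : ℝ × ℝ, HasDerivAt (fun e => g (p.1, e)) (fderiv ℝ g p ((0:ℝ), (1:ℝ))) p.2 := by
    intro p
    have h1 : HasDerivAt (fun e : ℝ => ((p.1, e) : ℝ × ℝ)) ((0:ℝ), (1:ℝ)) p.2 :=
      (hasDerivAt_const p.2 p.1).prodMk (hasDerivAt_id p.2)
    exact (hgd (p.1, p.2)).hasFDerivAt.comp_hasDerivAt p.2 h1
  -- identify the first partials
  have hAt : ∀ p : ℝ × ℝ, fderiv ℝ g p ((1:ℝ), (0:ℝ)) = ∑ k, ψ k (g p) • u p.1 p.2 k := by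
    intro p
    rw [← (hcv_t p).deriv]
    exact ht p.1 p.2 β
  have hAe : ∀ p : ℝ × ℝ, fderiv ℝ g p ((0:ℝ), (1:ℝ)) = ∑ k, ψ k (g p) • w p.1 p.2 k := by
    intro p
    rw [← (hcv_e p).deriv]
    exact hε p.1 p.2 β
  -- second derivative symmetry
  set f' : ℝ × ℝ → (ℝ × ℝ) →L[ℝ] (Fin d → ℝ) := fderiv ℝ g with hf'def
  have hf' : ContDiff ℝ 1 f' := hg.fderiv_right (by norm_num)
  have hf'd : DifferentiableAt ℝ f' (t, ε) := (hf'.differentiable one_ne_zero) (t, ε)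
  set f'' := fderiv ℝ f' (t, ε) with hf''def
  have hsymm : f'' ((1:ℝ), (0:ℝ)) ((0:ℝ), (1:ℝ)) = f'' ((0:ℝ), (1:ℝ)) ((1:ℝ), (0:ℝ)) :=
    second_derivative_symmetric (fun y => (hgd y).hasFDerivAt) hf'd.hasFDerivAt _ _
  -- mixed partials via evaluation
  have hmix1 : HasDerivAt (fun e => f' (t, e) ((1:ℝ), (0:ℝ))) (f'' ((0:ℝ), (1:ℝ)) ((1:ℝ), (0:ℝ))) ε := by
    have h1 : HasDerivAt (fun e : ℝ => ((t, e) : ℝ × ℝ)) ((0:ℝ), (1:ℝ)) ε :=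
      (hasDerivAt_const ε t).prodMk (hasDerivAt_id ε)
    have h2 : HasDerivAt (fun e => f' (t, e)) (f'' ((0:ℝ), (1:ℝ))) ε :=
      hf'd.hasFDerivAt.comp_hasDerivAt ε h1
    exact ((ContinuousLinearMap.apply ℝ (Fin d → ℝ) ((1:ℝ), (0:ℝ))).hasFDerivAt).comp_hasDerivAt ε h2
  have hmix2 : HasDerivAt (fun s => f' (s, ε) ((0:ℝ), (1:ℝ))) (f'' ((1:ℝ), (0:ℝ)) ((0:ℝ), (1:ℝ))) t := by
    have h1 : HasDerivAt (fun s : ℝ => ((s, ε) : ℝ × ℝ)) ((1:ℝ), (0:ℝ)) t :=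
      (hasDerivAt_id t).prodMk (hasDerivAt_const t ε)
    have h2 : HasDerivAt (fun s => f' (s, ε)) (f'' ((1:ℝ), (0:ℝ))) t :=
      hf'd.hasFDerivAt.comp_hasDerivAt t h1
    exact ((ContinuousLinearMap.apply ℝ (Fin d → ℝ) ((0:ℝ), (1:ℝ))).hasFDerivAt).comp_hasDerivAt t h2
  -- rewrite goal in terms of g
  have hgx : Q t ε β = g (t, ε) := rfl
  rw [hgx]
  set P : Fin d → ℝ := g (t, ε) with hP
  set Se : Fin d → ℝ := ∑ l, ψ l (g (t, ε)) • w t ε l with hSe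
  set St : Fin d → ℝ := ∑ l, ψ l (g (t, ε)) • u t ε l with hSt
  have hcv_e' : HasDerivAt (fun e => g (t, e)) Se ε := by
    have h := hcv_e (t, ε)
    rw [hAe (t, ε)] at h
    exact h
  have hcv_t' : HasDerivAt (fun s => g (s, ε)) St t := by
    have h := hcv_t (t, ε)
    rw [hAt (t, ε)] at h
    exact h
  -- derivatives of components of u and w
  have hukd : ∀ k, HasDerivAt (fun e => u t e k) (deriv (fun e => u t e k) ε) ε := by
    intro k
    have h1 : Differentiable ℝ (fun e : ℝ => u t e) := by
      have := hu.comp ((differentiable_const t).prodMk differentiable_id)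
      exact this
    have h2 : Differentiable ℝ (fun e : ℝ => u t e k) := by
      have := ((ContinuousLinearMap.proj k :
          ((Fin ng) → Fin d → ℝ) →L[ℝ] (Fin d → ℝ)).differentiable).comp h1
      exact this
    exact (h2 ε).hasDerivAt
  have hwkd : ∀ k, HasDerivAt (fun s => w s ε k) (deriv (fun s => w s ε k) t) t := by
    intro k
    have h1 : Differentiable ℝ (fun s : ℝ => w s ε) := by
      have := hw.comp (differentiable_id.prodMk (differentiable_const ε))
      exact this
    have h2 : Differentiable ℝ (fun s : ℝ => w s ε k) := by
      have := ((ContinuousLinearMap.proj k :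
          ((Fin ng) → Fin d → ℝ) →L[ℝ] (Fin d → ℝ)).differentiable).comp h1
      exact this
    exact (h2 t).hasDerivAt
  -- chain rule for ψ along the curves
  have hψe : ∀ k, HasDerivAt (fun e => ψ k (g (t, e))) (fderiv ℝ (ψ k) P Se) ε := fun k =>
    (((hψ k).differentiable one_ne_zero P).hasFDerivAt).comp_hasDerivAt ε hcv_e'
  have hψt : ∀ k, HasDerivAt (fun s => ψ k (g (s, ε))) (fderiv ℝ (ψ k) P St) t := fun k =>
    (((hψ k).differentiable one_ne_zero P).hasFDerivAt).comp_hasDerivAt t hcv_t'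
  -- derivatives of the sum expressions
  have hSum_e : HasDerivAt (fun e => ∑ k, ψ k (g (t, e)) • u t e k)
      (∑ k, (ψ k P • deriv (fun e => u t e k) ε + (fderiv ℝ (ψ k) P Se) • u t ε k)) ε :=
    HasDerivAt.fun_sum (fun k _ => (hψe k).smul (hukd k))
  have hSum_t : HasDerivAt (fun s => ∑ k, ψ k (g (s, ε)) • w s ε k)
      (∑ k, (ψ k P • deriv (fun s => w s ε k) t + (fderiv ℝ (ψ k) P St) • w t ε k)) t :=
    HasDerivAt.fun_sum (fun k _ => (hψt k).smul (hwkd k))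
  -- identify mixed partials
  have hmix1' : HasDerivAt (fun e => ∑ k, ψ k (g (t, e)) • u t e k)
      (f'' ((0:ℝ), (1:ℝ)) ((1:ℝ), (0:ℝ))) ε := by
    have hfe : (fun e => f' (t, e) ((1:ℝ), (0:ℝ)))
        = fun e => ∑ k, ψ k (g (t, e)) • u t e k := by
      funext e; exact hAt (t, e)
    exact hfe ▸ hmix1
  have hmix2' : HasDerivAt (fun s => ∑ k, ψ k (g (s, ε)) • w s ε k)
      (f'' ((1:ℝ), (0:ℝ)) ((0:ℝ), (1:ℝ))) t := by
    have hfe : (fun s => f' (s, ε) ((0:ℝ), (1:ℝ)))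
        = fun s => ∑ k, ψ k (g (s, ε)) • w s ε k := by
      funext s; exact hAe (s, ε)
    exact hfe ▸ hmix2
  have E : ∑ k, (ψ k P • deriv (fun e => u t e k) ε + (fderiv ℝ (ψ k) P Se) • u t ε k)
      = ∑ k, (ψ k P • deriv (fun s => w s ε k) t + (fderiv ℝ (ψ k) P St) • w t ε k) := by
    rw [← hmix1'.unique hSum_e, ← hmix2'.unique hSum_t]
    exact hsymm.symm
  rw [Finset.sum_add_distrib, Finset.sum_add_distrib] at E
  -- expand the directional derivatives of ψ
  have hak : ∀ k, fderiv ℝ (ψ k) P Se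
      = ∑ l, ψ l P * dot (w t ε l) (grad (ψ k) P) := by
    intro k
    rw [hSe, map_sum]
    exact Finset.sum_congr rfl fun l _ => by
      rw [map_smul, smul_eq_mul, fderiv_apply_eq_dot_grad]
  have hbk : ∀ k, fderiv ℝ (ψ k) P St
      = ∑ l, ψ l P * dot (u t ε l) (grad (ψ k) P) := by
    intro k
    rw [hSt, map_sum]
    exact Finset.sum_congr rfl fun l _ => by
      rw [map_smul, smul_eq_mul, fderiv_apply_eq_dot_grad]
  have hdouble : (∑ k, ∑ l, ψ k P •
        (dot (u t ε k) (grad (ψ l) P) • w t ε l - dot (w t ε k) (grad (ψ l) P) • u t ε l))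
      = ∑ l, (fderiv ℝ (ψ l) P St) • w t ε l - ∑ l, (fderiv ℝ (ψ l) P Se) • u t ε l := by
    rw [← Finset.sum_sub_distrib, Finset.sum_comm]
    refine Finset.sum_congr rfl fun l _ => ?_
    rw [hbk l, hak l, Finset.sum_smul, Finset.sum_smul, ← Finset.sum_sub_distrib]
    refine Finset.sum_congr rfl fun k _ => ?_
    rw [smul_sub, smul_smul, smul_smul]
  rw [hdouble]
  calc ∑ k, ψ k P • deriv (fun e => u t e k) ε
      = (∑ k, ψ k P • deriv (fun e => u t e k) ε + ∑ k, (fderiv ℝ (ψ k) P Se) • u t ε k)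
          - ∑ k, (fderiv ℝ (ψ k) P Se) • u t ε k := by abel
    _ = (∑ k, ψ k P • deriv (fun s => w s ε k) t + ∑ k, (fderiv ℝ (ψ k) P St) • w t ε k)
          - ∑ k, (fderiv ℝ (ψ k) P Se) • u t ε k := by rw [E]
    _ = ∑ k, ψ k P • deriv (fun s => w s ε k) t
          + (∑ l, (fderiv ℝ (ψ l) P St) • w t ε l - ∑ l, (fderiv ℝ (ψ l) P Se) • u t ε l) := by
        abel
end

section
/- Let ψ_k : ℝ^d → ℝ (k = 1,…,n_g) be continuously differentiable, M a symmetric invertible n_g × n_g real matrix, P, Q ∈ (ℝ^d)^{n_p}, and let m ∈ (ℝ^d)^{n_g} satisfy Σ_l M_{kl} m_l = Σ_β P_β ψ_k(Q_β) for all k. For grid tuples u, w ∈ (ℝ^d)^{n_g} define the particle bracket (ad_u w)_β = Σ_{k,l} ψ_k(Q_β) [ (u_k·∇ψ_l(Q_β)) w_l − (w_k·∇ψ_l(Q_β)) u_l ] ∈ ℝ^d, and define ad*_u m ∈ (ℝ^d)^{n_g} by (ad*_u m)_k = Σ_n (M^{-1})_{kn} [ Σ_{l,β} ∇ψ_l(Q_β)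 (P_β·u_l) ψ_n(Q_β) − Σ_β P_β ( ∇ψ_n(Q_β) · Σ_m u_m ψ_m(Q_β) ) ]. Then the duality relation Σ_{k,l} (ad*_u m)_k · M_{kl} w_l = − Σ_β P_β · (ad_u w)_β holds for every w; equivalently ⟨ad*_u m, w⟩_g = ⟨P, [ad_w u]^P⟩_p, where ⟨·,·⟩_g is the M-weighted grid pairing and ⟨·,·⟩_p is the Euclidean particle pairing. -/
lemma dot_eq_dotProduct {d : ℕ} (x y : Fin d → ℝ) : dot x y = x ⬝ᵥ y := rfl

lemma Matrix.sum_smul_sum_inv_smul {ι R V : Type*} [Fintype ι] [DecidableEq ι] [CommRing R]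
    [AddCommGroup V] [Module R V] {M : Matrix ι ι R} (hM : IsUnit M.det) (A : ι → V) (l : ι) :
    ∑ k, M l k • ∑ n, M⁻¹ k n • A n = A l := by
  simp_rw [Finset.smul_sum, smul_smul]
  rw [Finset.sum_comm]
  simp_rw [← Finset.sum_smul, ← Matrix.mul_apply, M.mul_nonsing_inv hM, Matrix.one_apply,
    ite_smul, one_smul, zero_smul, Finset.sum_ite_eq, Finset.mem_univ, if_true]

lemma Matrix.IsSymm.sum_sum_mul_dot {ι : Type*} [Fintype ι] {d : ℕ} {M : Matrix ι ι ℝ}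
    (hM : M.IsSymm) (a w : ι → Fin d → ℝ) :
    ∑ k, ∑ l, M k l * dot (a k) (w l) = ∑ l, dot (∑ k, M l k • a k) (w l) := by
  rw [Finset.sum_comm]
  simp only [dot_eq_dotProduct, sum_dotProduct, smul_dotProduct, smul_eq_mul, hM.apply]

lemma sum_dot_coadjoint_eq_neg_dot_bracket {d n : ℕ} (p : Fin d → ℝ) (c : Fin n → ℝ)
    (g u w : Fin n → Fin d → ℝ) :
    ∑ l, dot (∑ k, (dot p (u k) * c l) • g k - dot (g l) (∑ j, c j • u j) • p) (w l)
      = -dot p (∑ k, ∑ l, c k • (dot (u k) (g l) • w l - dot (w k) (g l) • u l)) := by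
  simp only [dot_eq_dotProduct, sum_dotProduct, dotProduct_sum, sub_dotProduct, dotProduct_sub,
    smul_dotProduct, dotProduct_smul, smul_eq_mul, Finset.sum_sub_distrib,
    Finset.sum_mul]
  rw [← Finset.sum_neg_distrib]
  simp only [mul_sub, Finset.sum_sub_distrib, neg_sub]
  congr 1
  · refine Finset.sum_congr rfl fun l _ => Finset.sum_congr rfl fun k _ => ?_
    rw [dotProduct_comm (w l)]
    ring
  · rw [Finset.sum_comm]
    refine Finset.sum_congr rfl fun k _ => Finset.sum_congr rfl fun l _ => ?_
    rw [dotProduct_comm (u k)]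
    ring

theorem stmt7_general (d ng np : ℕ)
    (ψ : Fin ng → (Fin d → ℝ) → ℝ)
    (M : Matrix (Fin ng) (Fin ng) ℝ) (hM : M.IsSymm) (hMinv : IsUnit M.det)
    (P Q : Fin np → Fin d → ℝ)
    (u : Fin ng → Fin d → ℝ)
    (adu : (Fin ng → Fin d → ℝ) → Fin np → Fin d → ℝ)
    (hadu : ∀ w β, adu w β = ∑ k, ∑ l, ψ k (Q β) •
      (dot (u k) (grad (ψ l) (Q β)) • w l - dot (w k) (grad (ψ l) (Q β)) • u l))
    (adstar : Fin ng → Fin d → ℝ)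
    (hadstar : ∀ k, adstar k = ∑ n, M⁻¹ k n •
      (∑ l, ∑ β, (dot (P β) (u l) * ψ n (Q β)) • grad (ψ l) (Q β)
        - ∑ β, dot (grad (ψ n) (Q β)) (∑ j, ψ j (Q β) • u j) • P β)) :
    ∀ w : Fin ng → Fin d → ℝ,
      ∑ k, ∑ l, M k l * dot (adstar k) (w l) = -∑ β, dot (P β) (adu w β) := by
  intro w
  calc ∑ k, ∑ l, M k l * dot (adstar k) (w l)
      = ∑ l, dot (∑ k, M l k • adstar k) (w l) := hM.sum_sum_mul_dot adstar w
    _ = ∑ l, ∑ β, dot (∑ k, (dot (P β) (u k) * ψ l (Q β)) • grad (ψ k) (Q β)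
          - dot (grad (ψ l) (Q β)) (∑ j, ψ j (Q β) • u j) • P β) (w l) := by
        simp only [hadstar, M.sum_smul_sum_inv_smul hMinv]
        refine Finset.sum_congr rfl fun l _ => ?_
        rw [Finset.sum_comm, ← Finset.sum_sub_distrib]
        exact sum_dotProduct _ _ _
    _ = -∑ β, dot (P β) (adu w β) := by
        rw [Finset.sum_comm, ← Finset.sum_neg_distrib]
        simp only [hadu, sum_dot_coadjoint_eq_neg_dot_bracket]

/-- With grid momentum `m` defined by `Σ_l M_{kl} m_l = Σ_β P_β ψ_k(Q_β)`,
the particle bracket `(ad_u w)_β` and the grid coadjoint operation `ad*_u m` satisfy the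
duality relation `Σ_{k,l} (ad*_u m)_k · M_{kl} w_l = − Σ_β P_β · (ad_u w)_β` for every `w`. -/
theorem stmt7 (d ng np : ℕ)
    (ψ : Fin ng → (Fin d → ℝ) → ℝ) (hψ : ∀ k, ContDiff ℝ 1 (ψ k))
    (M : Matrix (Fin ng) (Fin ng) ℝ) (hM : M.IsSymm) (hMinv : IsUnit M.det)
    (P Q : Fin np → Fin d → ℝ) (m : Fin ng → Fin d → ℝ)
    (hm : ∀ k, ∑ l, M k l • m l = ∑ β, ψ k (Q β) • P β)
    (u : Fin ng → Fin d → ℝ)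
    (adu : (Fin ng → Fin d → ℝ) → Fin np → Fin d → ℝ)
    (hadu : ∀ w β, adu w β = ∑ k, ∑ l, ψ k (Q β) •
      (dot (u k) (grad (ψ l) (Q β)) • w l - dot (w k) (grad (ψ l) (Q β)) • u l))
    (adstar : Fin ng → Fin d → ℝ)
    (hadstar : ∀ k, adstar k = ∑ n, M⁻¹ k n •
      (∑ l, ∑ β, (dot (P β) (u l) * ψ n (Q β)) • grad (ψ l) (Q β)
        - ∑ β, dot (grad (ψ n) (Q β)) (∑ j, ψ j (Q β) • u j) • P β)) :
    ∀ w : Fin ng → Fin d → ℝ,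
      ∑ k, ∑ l, M k l * dot (adstar k) (w l) = -∑ β, dot (P β) (adu w β) :=
  stmt7_general d ng np ψ M hM hMinv P Q u adu hadu adstar hadstar
end

section
/- Let ψ_k : ℝ^d → ℝ (k = 1,…,n_g) be continuously differentiable, and let M be a symmetric invertible n_g × n_g real matrix. Let u : I → (ℝ^d)^{n_g} be continuous and P, Q : I → (ℝ^d)^{n_p} continuously differentiable on an interval I, satisfying dQ_β/dt = Σ_k u_k ψ_k(Q_β) and dP_β/dt = −Σ_k (P_β·u_k) ∇ψ_k(Q_β) for all β. Define the grid momentum m(t) ∈ (ℝ^d)^{n_g} by m_k(t) = Σ_n (M^{-1})_{kn} Σ_β P_β(t) ψ_n(Q_β(t)). Then m is differentiable and satisfies the discrete Euler–Poincaré equation dm_k/dt + (ad*_u m)_k = 0 for every k, where (ad*_u m)_k = Σ_n (M^{-1})_{kn} [ Σ_{l,β} ∇ψ_l(Q_β) (P_β·u_l) ψ_n(Q_β) − Σ_β P_β ( ∇ψ_n(Q_β) · Σ_m u_m ψ_m(Q_β) ) ]. -/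
lemma fderiv_eq_dot {d : ℕ} {f : (Fin d → ℝ) → ℝ} {x : Fin d → ℝ}
    (hf : DifferentiableAt ℝ f x) (v : Fin d → ℝ) :
    fderiv ℝ f x v = dot (grad f x) v := by
  have hv : v = ∑ i, v i • (Pi.single i 1 : Fin d → ℝ) := by
    ext j
    simp [Finset.sum_apply, Pi.single_apply]
  conv_lhs => rw [hv]
  rw [map_sum]
  simp only [map_smul]
  simp [dot, grad, mul_comm]

lemma hasDerivAt_comp_grad {d : ℕ} {f : (Fin d → ℝ) → ℝ} (hf : ContDiff ℝ 1 f)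
    {Q : ℝ → Fin d → ℝ} {v : Fin d → ℝ} {t : ℝ} (hQ : HasDerivAt Q v t) :
    HasDerivAt (fun s => f (Q s)) (dot (grad f (Q t)) v) t := by
  have hd : DifferentiableAt ℝ f (Q t) :=
    (hf.differentiable one_ne_zero).differentiableAt
  have h := hd.hasFDerivAt.comp_hasDerivAt t hQ
  rwa [fderiv_eq_dot hd v] at h

/-- Along solutions of the canonical VPM equations, the grid momentum
`m_k = Σ_n (M⁻¹)_{kn} Σ_β P_β ψ_n(Q_β)` is differentiable and satisfies the discrete
Euler–Poincaré equation `ṁ_k + (ad*_u m)_k = 0`. -/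
theorem stmt8 (d ng np : ℕ)
    (ψ : Fin ng → (Fin d → ℝ) → ℝ) (hψ : ∀ k, ContDiff ℝ 1 (ψ k))
    (M : Matrix (Fin ng) (Fin ng) ℝ) (hM : M.IsSymm) (hMinv : IsUnit M.det)
    (I : Set ℝ)
    (u : ℝ → Fin ng → Fin d → ℝ) (hu : Continuous u)
    (P Q : ℝ → Fin np → Fin d → ℝ)
    (hQeq : ∀ t ∈ I, ∀ β, HasDerivAt (fun s => Q s β)
      (∑ k, ψ k (Q t β) • u t k) t)
    (hPeq : ∀ t ∈ I, ∀ β, HasDerivAt (fun s => P s β)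
      (-∑ k, dot (P t β) (u t k) • grad (ψ k) (Q t β)) t)
    (m : ℝ → Fin ng → Fin d → ℝ)
    (hm : ∀ t k, m t k = ∑ n, M⁻¹ k n • ∑ β, ψ n (Q t β) • P t β) :
    ∀ t ∈ I, ∀ k, HasDerivAt (fun s => m s k)
      (-(∑ n, M⁻¹ k n •
        (∑ l, ∑ β, (dot (P t β) (u t l) * ψ n (Q t β)) • grad (ψ l) (Q t β)
          - ∑ β, dot (grad (ψ n) (Q t β)) (∑ j, ψ j (Q t β) • u t j) • P t β))) t := by
  intro t ht k
  have hfun : (fun s => m s k)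
      = fun s => ∑ n, M⁻¹ k n • ∑ β, ψ n (Q s β) • P s β :=
    funext fun s => hm s k
  rw [hfun]
  have hD : HasDerivAt (fun s => ∑ n, M⁻¹ k n • ∑ β, ψ n (Q s β) • P s β)
      (∑ n, M⁻¹ k n • ∑ β,
        (ψ n (Q t β) • (-∑ l, dot (P t β) (u t l) • grad (ψ l) (Q t β))
          + dot (grad (ψ n) (Q t β)) (∑ j, ψ j (Q t β) • u t j) • P t β)) t := by
    apply HasDerivAt.fun_sum
    intro n _
    apply HasDerivAt.fun_const_smul
    apply HasDerivAt.fun_sum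
    intro β _
    exact (hasDerivAt_comp_grad (hψ n) (hQeq t ht β)).smul (hPeq t ht β)
  convert hD using 1
  rw [neg_eq_iff_eq_neg, ← Finset.sum_neg_distrib]
  refine Finset.sum_congr rfl fun n _ => ?_
  rw [← smul_neg]
  congr 1
  simp only [smul_neg, neg_add, Finset.sum_add_distrib, ← Finset.sum_neg_distrib, neg_neg,
    Finset.smul_sum, smul_smul]
  rw [Finset.sum_comm]
  simp [sub_eq_add_neg, mul_comm, add_comm]
end

section
/- Let ψ_k : ℝ^d → ℝ (k = 1,…,n_g) be continuously differentiable, M a symmetric invertible n_g × n_g real matrix, u : I → (ℝ^d)^{n_g} continuous, and Q : I → (ℝ^d)^{n_p} continuously differentiable with dQ_β/dt = Σ_m u_m ψ_m(Q_β) for all β. Given constant weights D̃_β ∈ ℝ (β = 1,…,n_p), define the grid density D_k(t) = Σ_l (M^{-1})_{kl} Σ_β D̃_β ψ_l(Q_β(t)). Then D is differentiable and satisfies the discretised continuity equation dD_k/dt = − [∇·( [u]^P D̃ )]^G_k, where the right-hand side is explicitly dD_k/dt = Σ_l (M^{-1})_{kl} Σ_β D̃_β ∇ψ_l(Q_β(t))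 · ( Σ_m u_m(t) ψ_m(Q_β(t)) ). -/
lemma fderiv_eq_dot_grad {d : ℕ} (f : (Fin d → ℝ) → ℝ) (x v : Fin d → ℝ)
    (hf : DifferentiableAt ℝ f x) :
    fderiv ℝ f x v = dot (grad f x) v := by
  have hv : v = ∑ i, v i • (Pi.single i 1 : Fin d → ℝ) := by
    ext j
    simp [Finset.sum_apply, Pi.single_apply, mul_comm]
  conv_lhs => rw [hv]
  rw [map_sum]
  simp only [map_smul, smul_eq_mul]
  simp [dot, grad, mul_comm]

/-- With particles moving by the VPM tangent relation
`Q̇_β = Σ_m u_m ψ_m(Q_β)` and constant weights `D̃_β`, the grid density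
`D_k(t) = Σ_l (M⁻¹)_{kl} Σ_β D̃_β ψ_l(Q_β(t))` is differentiable and satisfies the
discretised continuity equation
`dD_k/dt = Σ_l (M⁻¹)_{kl} Σ_β D̃_β ∇ψ_l(Q_β)·( Σ_m u_m ψ_m(Q_β) )
         = −[∇·([u]^P D̃)]^G_k`. -/
theorem stmt9 (d ng np : ℕ)
    (ψ : Fin ng → (Fin d → ℝ) → ℝ) (hψ : ∀ k, ContDiff ℝ 1 (ψ k))
    (M : Matrix (Fin ng) (Fin ng) ℝ) (hM : M.IsSymm) (hMinv : IsUnit M.det)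
    (I : Set ℝ)
    (u : ℝ → Fin ng → Fin d → ℝ) (hu : Continuous u)
    (Q : ℝ → Fin np → Fin d → ℝ)
    (hQeq : ∀ t ∈ I, ∀ β, HasDerivAt (fun s => Q s β)
      (∑ m', ψ m' (Q t β) • u t m') t)
    (Dw : Fin np → ℝ)
    (D : ℝ → Fin ng → ℝ)
    (hD : ∀ t k, D t k = ∑ l, M⁻¹ k l * ∑ β, Dw β * ψ l (Q t β)) :
    ∀ t ∈ I, ∀ k, HasDerivAt (fun s => D s k)
      (∑ l, M⁻¹ k l * ∑ β, Dw β *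
        dot (grad (ψ l) (Q t β)) (∑ m', ψ m' (Q t β) • u t m')) t := by
  intro t ht k
  have hfun : (fun s => D s k) = fun s => ∑ l, M⁻¹ k l * ∑ β, Dw β * ψ l (Q s β) := by
    funext s; exact hD s k
  rw [hfun]
  apply HasDerivAt.fun_sum
  intro l _
  apply HasDerivAt.const_mul
  apply HasDerivAt.fun_sum
  intro β _
  apply HasDerivAt.const_mul
  have hdiff : DifferentiableAt ℝ (ψ l) (Q t β) :=
    (hψ l).differentiable one_ne_zero |>.differentiableAt
  have hcomp : HasDerivAt (fun s => ψ l (Q s β))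
      (fderiv ℝ (ψ l) (Q t β) (∑ m', ψ m' (Q t β) • u t m')) t :=
    (hdiff.hasFDerivAt).comp_hasDerivAt t (hQeq t ht β)
  rwa [fderiv_eq_dot_grad _ _ _ hdiff] at hcomp
end

section
/- Let ψ_k : ℝ^d → ℝ (k = 1,…,n_g) be continuously differentiable and let u : I → (ℝ^d)^{n_g} be continuous. Let Q, P : I → (ℝ^d)^{n_p} and J_β : I → ℝ^{d×d} be continuously differentiable and satisfy, for all β: dQ_β/dt = Σ_k u_k ψ_k(Q_β), dP_β/dt = −Σ_k (P_β·u_k) ∇ψ_k(Q_β), and dJ_β/dt = ( Σ_k u_k (∇ψ_k(Q_β))^T ) J_β. Then for every β the right-action momentum map J^R_β(t) = J_β(t)^T P_β(t) ∈ ℝ^d is constant in t; equivalently, P_β · (J_β v) is conserved for every fixed vector v ∈ ℝ^d. -/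
/-- A real function with vanishing derivative on a convex set is constant there. -/
lemma const_of_deriv_zero {I : Set ℝ} (hI : Convex ℝ I) {f : ℝ → ℝ}
    (hf : ∀ t ∈ I, HasDerivAt f 0 t) :
    ∀ s ∈ I, ∀ t ∈ I, f s = f t := by
  intro s hs t ht
  have h := hI.norm_image_sub_le_of_norm_hasDerivWithin_le
    (f' := fun _ => (0:ℝ)) (C := 0)
    (fun x hx => (hf x hx).hasDerivWithinAt)
    (fun x hx => by simp) hs ht
  simp only [zero_mul] at h
  have : f t - f s = 0 := by
    have := le_antisymm h (norm_nonneg _)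
    simpa [norm_eq_zero] using this
  linarith

/-- Along solutions of the extended semi-discrete EPDiff system
`Q̇_β = Σ_k u_k ψ_k(Q_β)`, `Ṗ_β = −Σ_k (P_β·u_k) ∇ψ_k(Q_β)`,
`J̇_β = (Σ_k u_k ∇ψ_k(Q_β)ᵀ) J_β`, the right-action momentum map
`J^R_β = J_βᵀ P_β` is constant in time; equivalently `P_β·(J_β v)` is conserved for every
fixed vector `v`. -/
theorem stmt13 (d ng np : ℕ)
    (ψ : Fin ng → (Fin d → ℝ) → ℝ) (hψ : ∀ k, ContDiff ℝ 1 (ψ k))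
    (I : Set ℝ) (hI : Convex ℝ I)
    (u : ℝ → Fin ng → Fin d → ℝ) (hu : Continuous u)
    (Q P : ℝ → Fin np → Fin d → ℝ)
    (J : ℝ → Fin np → Matrix (Fin d) (Fin d) ℝ)
    (hQeq : ∀ t ∈ I, ∀ β, HasDerivAt (fun s => Q s β)
      (∑ k, ψ k (Q t β) • u t k) t)
    (hPeq : ∀ t ∈ I, ∀ β, HasDerivAt (fun s => P s β)
      (-∑ k, dot (P t β) (u t k) • grad (ψ k) (Q t β)) t)
    (hJeq : ∀ t ∈ I, ∀ β i j, HasDerivAt (fun s => J s β i j)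
      (∑ l, (∑ k, u t k i * grad (ψ k) (Q t β) l) * J t β l j) t) :
    (∀ β, ∀ s ∈ I, ∀ t ∈ I,
      (J s β).transpose.mulVec (P s β) = (J t β).transpose.mulVec (P t β))
    ∧ (∀ β, ∀ v : Fin d → ℝ, ∀ s ∈ I, ∀ t ∈ I,
      dot (P s β) ((J s β).mulVec v) = dot (P t β) ((J t β).mulVec v)) := by
  -- key: each component of `Jᵀ P` is constant on `I`
  have key : ∀ β i, ∀ s ∈ I, ∀ t ∈ I,
      (∑ j, J s β j i * P s β j) = (∑ j, J t β j i * P t β j) := by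
    intro β i
    apply const_of_deriv_zero hI
    intro t ht
    -- abbreviations at time t
    set g : Fin ng → Fin d → ℝ := fun k => grad (ψ k) (Q t β) with hg
    -- derivative of each coordinate of P
    have hP : ∀ j, HasDerivAt (fun s => P s β j)
        ((-∑ k, dot (P t β) (u t k) • g k) j) t := by
      intro j
      exact (hasDerivAt_pi.1 (hPeq t ht β)) j
    -- derivative of the sum
    have hsum : HasDerivAt (fun s => ∑ j, J s β j i * P s β j)
        (∑ j, ((∑ l, (∑ k, u t k j * g k l) * J t β l i) * P t β j
          + J t β j i * ((-∑ k, dot (P t β) (u t k) • g k) j))) t := by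
      apply HasDerivAt.fun_sum
      intro j _
      exact (hJeq t ht β j i).mul (hP j)
    convert hsum using 1
    -- the algebraic identity : the derivative vanishes
    simp only [Pi.neg_apply, Finset.sum_apply, Pi.smul_apply, smul_eq_mul, dot,
      mul_neg, ← sub_eq_add_neg]
    rw [eq_comm]
    rw [Finset.sum_sub_distrib, sub_eq_zero]
    have e1 : ∀ x, (∑ l, (∑ k, u t k x * g k l) * J t β l i) * P t β x
        = ∑ k : Fin ng, ∑ l : Fin d, u t k x * P t β x * (g k l * J t β l i) := by
      intro x
      simp only [Finset.sum_mul]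
      rw [Finset.sum_comm]
      refine Finset.sum_congr rfl fun k _ => Finset.sum_congr rfl fun l _ => by ring
    have e2 : ∀ x, J t β x i * ∑ k, (∑ m, P t β m * u t k m) * g k x
        = ∑ k : Fin ng, ∑ m : Fin d, u t k m * P t β m * (g k x * J t β x i) := by
      intro x
      rw [Finset.mul_sum]
      refine Finset.sum_congr rfl fun k _ => ?_
      rw [Finset.sum_mul, Finset.mul_sum]
      refine Finset.sum_congr rfl fun m _ => by ring
    simp only [e1, e2]
    rw [Finset.sum_comm]
    conv_rhs => rw [Finset.sum_comm]
    refine Finset.sum_congr rfl fun k _ => Finset.sum_comm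
  constructor
  · intro β s hs t ht
    funext i
    simpa [Matrix.mulVec, dotProduct, Matrix.transpose] using key β i s hs t ht
  · intro β v s hs t ht
    have h : ∀ r, dot (P r β) ((J r β).mulVec v)
        = ∑ i, (∑ j, J r β j i * P r β j) * v i := by
      intro r
      simp only [dot, Matrix.mulVec, dotProduct, Finset.mul_sum, Finset.sum_mul]
      rw [Finset.sum_comm]
      exact Finset.sum_congr rfl fun i _ => Finset.sum_congr rfl fun j _ => by ring
    rw [h s, h t]
    exact Finset.sum_congr rfl fun i _ => by rw [key β i s hs t ht]
end

section
/- Let ψ_k : ℝ^d → ℝ (k = 1,…,n_g) be continuously differentiable, u : I → (ℝ^d)^{n_g} continuous, and let Q, P : I → (ℝ^d)^{n_p} and J_β : I → ℝ^{d×d} be continuously differentiable solutions of the extended semi-discrete EPDiff system: dQ_β/dt = Σ_k u_k ψ_k(Q_β), dP_β/dt = −Σ_k (P_β·u_k) ∇ψ_k(Q_β), dJ_β/dt = ( Σ_k u_k (∇ψ_k(Q_β))^T ) J_β. Let B ⊆ {1,…,n_p} be any subset, let D̃_β ≠ 0 be constant weights, and let Δx^0_β ∈ ℝ^d be fixed initial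 line elements; set Δx_β(t) = J_β(t) Δx^0_β. Then the discrete circulation sum I(t) = Σ_{β∈B} ( P_β(t) / D̃_β ) · Δx_β(t) is constant in t: dI/dt = 0 (discrete Kelvin circulation theorem). -/
lemma sum_comm3 {α β γ M : Type*} [AddCommMonoid M] [Fintype α] [Fintype β] [Fintype γ]
    (f : α → β → γ → M) :
    ∑ a, ∑ b, ∑ c, f a b c = ∑ c, ∑ b, ∑ a, f a b c :=
  calc ∑ a, ∑ b, ∑ c, f a b c
      = ∑ a, ∑ c, ∑ b, f a b c := Finset.sum_congr rfl fun _ _ => Finset.sum_comm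
    _ = ∑ c, ∑ a, ∑ b, f a b c := Finset.sum_comm
    _ = ∑ c, ∑ b, ∑ a, f a b c := Finset.sum_congr rfl fun _ _ => Finset.sum_comm

lemma aux_L3 {d ng : ℕ} (v g : Fin ng → Fin d → ℝ) (Jm : Matrix (Fin d) (Fin d) ℝ)
    (Δ : Fin d → ℝ) (i : Fin d) :
    ∑ j, (∑ l, (∑ k, v k i * g k l) * Jm l j) * Δ j
      = ∑ k, v k i * ∑ l, g k l * ∑ j, Jm l j * Δ j := by
  simp only [Finset.sum_mul, Finset.mul_sum]
  rw [sum_comm3]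
  exact Finset.sum_congr rfl fun k _ => Finset.sum_congr rfl fun l _ =>
    Finset.sum_congr rfl fun j _ => by ring

lemma aux_L1 {d ng : ℕ} (c : ℝ) (aa : Fin ng → ℝ) (g : Fin ng → Fin d → ℝ)
    (S : Fin d → ℝ) :
    ∑ x, (c * -∑ k, aa k * g k x) * S x = ∑ k, -(c * aa k * ∑ x, g k x * S x) := by
  have e : ∀ x, (c * -∑ k, aa k * g k x) * S x = ∑ k, -(c * aa k * (g k x * S x)) := by
    intro x
    simp only [mul_neg, neg_mul, Finset.mul_sum, Finset.sum_mul, ← Finset.sum_neg_distrib]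
    exact Finset.sum_congr rfl fun k _ => by ring
  rw [Finset.sum_congr rfl fun x _ => e x, Finset.sum_comm]
  refine Finset.sum_congr rfl fun k _ => ?_
  rw [Finset.mul_sum, ← Finset.sum_neg_distrib]

lemma aux_L2 {d ng : ℕ} (c : ℝ) (pt : Fin d → ℝ) (v : Fin ng → Fin d → ℝ)
    (T : Fin ng → ℝ) :
    ∑ x, c * pt x * ∑ k, v k x * T k = ∑ k, c * (∑ m, pt m * v k m) * T k := by
  have e : ∀ x, c * pt x * ∑ k, v k x * T k = ∑ k, c * pt x * (v k x * T k) := by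
    intro x; rw [Finset.mul_sum]
  rw [Finset.sum_congr rfl fun x _ => e x, Finset.sum_comm]
  refine Finset.sum_congr rfl fun k _ => ?_
  have : c * (∑ m, pt m * v k m) * T k = ∑ x, c * pt x * (v k x * T k) := by
    rw [Finset.mul_sum, Finset.sum_mul]
    exact Finset.sum_congr rfl fun x _ => by ring
  exact this.symm

lemma cancel {d ng : ℕ} (c : ℝ) (pt : Fin d → ℝ) (g : Fin ng → Fin d → ℝ)
    (v : Fin ng → Fin d → ℝ) (Jm : Matrix (Fin d) (Fin d) ℝ) (Δ : Fin d → ℝ) :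
    ∑ i, ((c * ((-∑ k, (∑ m, pt m * v k m) • g k) i)) * (∑ j, Jm i j * Δ j)
      + (c * pt i) * (∑ j, (∑ l, (∑ k, v k i * g k l) * Jm l j) * Δ j)) = 0 := by
  simp only [aux_L3, Pi.neg_apply, Finset.sum_apply, Pi.smul_apply, smul_eq_mul,
    Finset.sum_add_distrib]
  rw [aux_L1, aux_L2, ← Finset.sum_add_distrib]
  simp

/-- **discrete Kelvin circulation theorem.** Along solutions of the extended
semi-discrete EPDiff system, for any subset `B` of particles, nonzero constant density
weights `D̃_β` and fixed initial line elements `Δx⁰_β`, the discrete circulation sum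
`I(t) = Σ_{β∈B} (P_β/D̃_β)·(J_β Δx⁰_β)` is constant in `t`. -/
theorem stmt14 (d ng np : ℕ)
    (ψ : Fin ng → (Fin d → ℝ) → ℝ) (hψ : ∀ k, ContDiff ℝ 1 (ψ k))
    (I : Set ℝ) (hI : Convex ℝ I)
    (u : ℝ → Fin ng → Fin d → ℝ) (hu : Continuous u)
    (Q P : ℝ → Fin np → Fin d → ℝ)
    (J : ℝ → Fin np → Matrix (Fin d) (Fin d) ℝ)
    (hQeq : ∀ t ∈ I, ∀ β, HasDerivAt (fun s => Q s β)
      (∑ k, ψ k (Q t β) • u t k) t)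
    (hPeq : ∀ t ∈ I, ∀ β, HasDerivAt (fun s => P s β)
      (-∑ k, dot (P t β) (u t k) • grad (ψ k) (Q t β)) t)
    (hJeq : ∀ t ∈ I, ∀ β i j, HasDerivAt (fun s => J s β i j)
      (∑ l, (∑ k, u t k i * grad (ψ k) (Q t β) l) * J t β l j) t)
    (B : Finset (Fin np)) (Dw : Fin np → ℝ) (hDw : ∀ β, Dw β ≠ 0)
    (Δx0 : Fin np → Fin d → ℝ) :
    ∀ s ∈ I, ∀ t ∈ I,
      ∑ β ∈ B, dot ((Dw β)⁻¹ • P s β) ((J s β).mulVec (Δx0 β))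
        = ∑ β ∈ B, dot ((Dw β)⁻¹ • P t β) ((J t β).mulVec (Δx0 β)) := by
  intro s hs t ht
  set F : ℝ → ℝ :=
    fun r => ∑ β ∈ B, dot ((Dw β)⁻¹ • P r β) ((J r β).mulVec (Δx0 β)) with hF
  have key : ∀ x ∈ I, HasDerivAt F 0 x := by
    intro x hx
    have hβ : ∀ β ∈ B, HasDerivAt
        (fun r => dot ((Dw β)⁻¹ • P r β) ((J r β).mulVec (Δx0 β))) 0 x := by
      intro β _
      have hPi : ∀ i, HasDerivAt (fun r => P r β i)
          ((-∑ k, dot (P x β) (u x k) • grad (ψ k) (Q x β)) i) x :=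
        fun i => (hasDerivAt_pi.mp (hPeq x hx β)) i
      have hterm : ∀ i, HasDerivAt
          (fun r => ((Dw β)⁻¹ * P r β i) * ∑ j, J r β i j * Δx0 β j)
          (((Dw β)⁻¹ * ((-∑ k, dot (P x β) (u x k) • grad (ψ k) (Q x β)) i))
              * (∑ j, J x β i j * Δx0 β j)
            + ((Dw β)⁻¹ * P x β i)
              * (∑ j, (∑ l, (∑ k, u x k i * grad (ψ k) (Q x β) l) * J x β l j) * Δx0 β j)) x :=
        fun i => ((hPi i).const_mul ((Dw β)⁻¹)).mul
          (HasDerivAt.fun_sum fun j _ => (hJeq x hx β i j).mul_const (Δx0 β j))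
      have hsum := HasDerivAt.fun_sum (fun i (_ : i ∈ (Finset.univ : Finset (Fin d))) => hterm i)
      have hfun : (fun r => dot ((Dw β)⁻¹ • P r β) ((J r β).mulVec (Δx0 β)))
          = fun r => ∑ i, ((Dw β)⁻¹ * P r β i) * ∑ j, J r β i j * Δx0 β j := by
        funext r
        simp [dot, Matrix.mulVec, dotProduct]
      rw [hfun]
      have hzero := cancel ((Dw β)⁻¹) (P x β) (fun k => grad (ψ k) (Q x β)) (u x)
        (J x β) (Δx0 β)
      simp only [dot] at hsum ⊢
      rw [hzero] at hsum
      exact hsum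
    have := HasDerivAt.fun_sum hβ
    simpa using this
  have h0 : ∀ x ∈ I, HasFDerivWithinAt F (0 : ℝ →L[ℝ] ℝ) I x := by
    intro x hx
    have h := (key x hx).hasFDerivAt
    have e : (ContinuousLinearMap.toSpanSingleton ℝ (0 : ℝ)) = 0 := by
      ext; simp
    rw [e] at h
    exact h.hasFDerivWithinAt
  have hb := hI.norm_image_sub_le_of_norm_hasFDerivWithin_le
    (f' := fun _ => (0 : ℝ →L[ℝ] ℝ)) (C := 0) (fun x hx => h0 x hx)
    (fun x hx => by simp) ht hs
  simp only [zero_mul, norm_le_zero_iff, sub_eq_zero] at hb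
  exact hb
end
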